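/- arXiv:2511.09939 — 4 statements merged into one kernel-verified Lean document; each statement's English description precedes it below -/
import Mathlib

section
/- For every polynomial p ∈ ℂ[X] and every z ∈ ℂ, the series ∑_{n=0}^∞ conj(c(z)_n) · ((a† ∘ p(a)) c(z))_n converges absolutely and its sum equals conj(z) · p(z) · exp(|z|²). (This is the coherent-state expectation Tr(Aρ) = z̄·F(z) for the single-mode generator A = a†F(a).) -/
/-- The coherent sequence `c(z)ₙ = zⁿ/√(n!)`. -/
noncomputable def coherent (z : ℂ) : ℕ → ℂ :=
  fun n => z ^ n / (Real.sqrt (Nat.factorial n) : ℂ)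

/-- The annihilation operator `(a x)ₙ = √(n+1)·x_{n+1}`. -/
noncomputable def ann : Module.End ℂ (ℕ → ℂ) :=
  { toFun := fun x n => (Real.sqrt (n + 1) : ℂ) * x (n + 1)
    map_add' := by intro x y; funext n; simp [mul_add]
    map_smul' := by intro c x; funext n; simp [smul_eq_mul]; ring }

/-- The creation operator `(a† x)₀ = 0`, `(a† x)ₙ = √n·x_{n−1}` for `n ≥ 1`. -/
noncomputable def cre : Module.End ℂ (ℕ → ℂ) :=
  { toFun := fun x n => match n with
      | 0 => 0
      | Nat.succ m => (Real.sqrt (m + 1) : ℂ) * x m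
    map_add' := by intro x y; funext n; cases n <;> simp [mul_add]
    map_smul' := by intro c x; funext n; cases n <;> (simp [smul_eq_mul]; try ring) }

lemma sqrt_fact_ne (n : ℕ) : (Real.sqrt (Nat.factorial n) : ℂ) ≠ 0 := by
  have : Real.sqrt (Nat.factorial n) ≠ 0 := by positivity
  exact_mod_cast this

lemma sqrt_succ_ne (n : ℕ) : ((Real.sqrt ((n:ℝ)+1) : ℝ) : ℂ) ≠ 0 := by
  have : Real.sqrt ((n:ℝ)+1) ≠ 0 := by positivity
  exact_mod_cast this

lemma fact_split (n : ℕ) : ((Real.sqrt (Nat.factorial (n+1)) : ℝ) : ℂ)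
    = ((Real.sqrt ((n:ℝ)+1) : ℝ) : ℂ) * ((Real.sqrt (Nat.factorial n) : ℝ) : ℂ) := by
  rw [show (Real.sqrt (Nat.factorial (n+1)) : ℝ)
      = Real.sqrt ((n:ℝ)+1) * Real.sqrt (Nat.factorial n) by
    rw [Nat.factorial_succ, ← Real.sqrt_mul (by positivity)]; push_cast; ring_nf]
  push_cast; ring

lemma ann_coherent (z : ℂ) : ann (coherent z) = z • coherent z := by
  funext n
  show (Real.sqrt ((n:ℝ) + 1) : ℂ) * coherent z (n + 1) = z * coherent z n
  simp only [coherent, fact_split]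
  rw [mul_div_assoc', mul_div_mul_left _ _ (sqrt_succ_ne n), pow_succ, mul_comm (z^n) z,
    mul_div_assoc]

lemma hasEig (z : ℂ) : ann.HasEigenvector z (coherent z) := by
  constructor
  · rw [Module.End.mem_eigenspace_iff]; exact ann_coherent z
  · intro h
    have : coherent z 0 = 0 := by rw [h]; rfl
    simp [coherent] at this

lemma term_succ (z : ℂ) (m : ℕ) :
    (starRingEnd ℂ) (coherent z (m+1)) * (cre (coherent z)) (m+1)
      = (starRingEnd ℂ) z * (((‖z‖^2 : ℝ) : ℂ))^m / (Nat.factorial m : ℂ) := by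
  show (starRingEnd ℂ) (coherent z (m+1)) * ((Real.sqrt ((m:ℝ) + 1) : ℂ) * coherent z m) = _
  set s : ℂ := ((Real.sqrt ((m:ℝ)+1) : ℝ) : ℂ) with hs
  set t : ℂ := ((Real.sqrt (Nat.factorial m) : ℝ) : ℂ) with ht
  have h2 : t * t = (Nat.factorial m : ℂ) := by
    rw [ht, ← Complex.ofReal_mul, Real.mul_self_sqrt (by positivity)]; norm_cast
  have h3 : (starRingEnd ℂ) z * z = ((‖z‖^2 : ℝ) : ℂ) := by
    rw [mul_comm, Complex.mul_conj]
    norm_cast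
    rw [Complex.normSq_eq_norm_sq]
  have key : ((starRingEnd ℂ) z)^m * z^m = (((‖z‖^2:ℝ)):ℂ)^m := by
    rw [← mul_pow, h3]
  simp only [coherent, map_div₀, map_pow, map_mul, Complex.conj_ofReal, fact_split]
  rw [show ((starRingEnd ℂ) z)^(m+1) / (s * t) * (s * (z^m / t))
      = ((starRingEnd ℂ) z)^(m+1) * z^m * ((s*1)/(s*(t*t))) by ring,
    mul_div_mul_left _ _ (sqrt_succ_ne m), h2, pow_succ, div_eq_mul_inv, div_eq_mul_inv, ← key]
  ring

lemma cre_coherent_zero (z : ℂ) : (cre (coherent z)) 0 = 0 := rfl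

/-- Coherent-state expectation of the generator `A = a† p(a)`: the series
`∑ₙ conj(c(z)ₙ)·((a† ∘ p(a)) c(z))ₙ` converges absolutely, with sum
`conj(z)·p(z)·exp(|z|²)`. -/
theorem coherent_expectation_generator (p : Polynomial ℂ) (z : ℂ) :
    Summable (fun n : ℕ =>
      ‖(starRingEnd ℂ) (coherent z n) * ((cre * Polynomial.aeval ann p) (coherent z)) n‖) ∧
    (∑' n : ℕ, (starRingEnd ℂ) (coherent z n) * ((cre * Polynomial.aeval ann p) (coherent z)) n)
      = (starRingEnd ℂ) z * Polynomial.eval z p * (Real.exp (‖z‖ ^ 2) : ℂ) := by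
  have hF : (cre * Polynomial.aeval ann p) (coherent z)
      = Polynomial.eval z p • cre (coherent z) := by
    show cre ((Polynomial.aeval ann p) (coherent z)) = _
    rw [Module.End.aeval_apply_of_hasEigenvector (hasEig z), map_smul]
  set t : ℕ → ℂ := fun n => (starRingEnd ℂ) (coherent z n) * (cre (coherent z)) n with htdef
  have hg : (fun n : ℕ => (starRingEnd ℂ) (coherent z n)
      * ((cre * Polynomial.aeval ann p) (coherent z)) n)
      = fun n => Polynomial.eval z p * t n := by
    funext n; rw [hF]; simp [htdef, Pi.smul_apply, smul_eq_mul]; ring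
  have ht0 : t 0 = 0 := by simp [htdef, cre_coherent_zero]
  have hts : ∀ m : ℕ, t (m+1)
      = (starRingEnd ℂ) z * (((‖z‖^2 : ℝ) : ℂ))^m / (Nat.factorial m : ℂ) := fun m =>
    term_succ z m
  have hnorm : ∀ m : ℕ, ‖t (m+1)‖ = ‖z‖ * ((‖z‖^2)^m / (Nat.factorial m : ℝ)) := by
    intro m
    rw [hts m]
    rw [norm_div, norm_mul]
    simp [Complex.norm_real, norm_pow, abs_of_nonneg (by positivity : (0:ℝ) ≤ ‖z‖^2)]
    ring
  have hsummN : Summable fun n : ℕ => ‖t n‖ := by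
    rw [← summable_nat_add_iff 1]
    apply Summable.congr ((Real.summable_pow_div_factorial (‖z‖^2)).mul_left ‖z‖)
    intro m; exact (hnorm m).symm
  have hsumt : Summable t := hsummN.of_norm
  have hexp : (∑' m : ℕ, (((‖z‖^2 : ℝ) : ℂ))^m / (Nat.factorial m : ℂ))
      = ((Real.exp (‖z‖^2) : ℝ) : ℂ) := by
    rw [Complex.ofReal_exp, Complex.exp_eq_exp_ℂ, NormedSpace.exp_eq_tsum_div]
  constructor
  · apply Summable.congr (hsummN.mul_left ‖Polynomial.eval z p‖)
    intro n; rw [← norm_mul, ← congrFun hg n]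
  · rw [hg, tsum_mul_left, Summable.tsum_eq_zero_add hsumt, ht0, zero_add]
    have : ∑' m : ℕ, t (m+1)
        = (starRingEnd ℂ) z * ∑' m : ℕ, (((‖z‖^2 : ℝ) : ℂ))^m / (Nat.factorial m : ℂ) := by
      rw [← tsum_mul_left]
      exact tsum_congr fun m => by rw [hts m]; ring
    rw [this, hexp]
    ring
end

section
/- For every polynomial p ∈ ℂ[X], the commutator of p(a) with the creation operator equals the formal derivative of p evaluated at a: as linear endomorphisms of the space of sequences ℕ → ℂ, p(a) ∘ a† − a† ∘ p(a) = p'(a), where p' denotes the formal derivative of p. -/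
/-!
Since `q ↦ q b - b q` is a derivation of any ring, `[a, b] = 1` forces `[p(a), b] = p'(a)` for
every polynomial `p`, by induction on `p` through `p ↦ p X`. The canonical commutation relation
`[a, a†] = 1` is a direct computation, as `√(n+2)² - √(n+1)² = 1`.
-/

open Polynomial

theorem Polynomial.aeval_mul_sub_mul_aeval_of_mul_sub_mul_eq_one {R A : Type*} [CommSemiring R]
    [Ring A] [Algebra R A] {a b : A} (hab : a * b - b * a = 1) (p : R[X]) :
    aeval a p * b - b * aeval a p = aeval a (derivative p) := by
  induction p using Polynomial.induction_on with
  | C c => simp [Algebra.commutes]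
  | add p q hp hq =>
    simp only [map_add, add_mul, mul_add, ← hp, ← hq]
    abel
  | monomial n c ih =>
    rw [pow_succ, ← mul_assoc]
    generalize C c * X ^ n = q at ih ⊢
    calc aeval a (q * X) * b - b * aeval a (q * X)
        = aeval a q * (a * b - b * a) + (aeval a q * b - b * aeval a q) * a := by
          simp only [map_mul, aeval_X]; noncomm_ring
      _ = aeval a (derivative (q * X)) := by
          simp only [hab, ih, derivative_mul, derivative_X, mul_one, map_add, map_mul, aeval_X]
          abel

lemma ann_apply (x : ℕ → ℂ) (n : ℕ) : ann x n = (Real.sqrt (n + 1) : ℂ) * x (n + 1) := rfl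

lemma cre_apply_succ (x : ℕ → ℂ) (n : ℕ) : cre x (n + 1) = (Real.sqrt (n + 1) : ℂ) * x n := rfl

lemma Complex.ofReal_sqrt_mul_self {x : ℝ} (hx : 0 ≤ x) : (Real.sqrt x : ℂ) * Real.sqrt x = x := by
  rw [← Complex.ofReal_mul, Real.mul_self_sqrt hx]

lemma ann_mul_cre_sub_cre_mul_ann : ann * cre - cre * ann = 1 := by
  ext x n
  cases n with
  | zero => simp [Module.End.mul_apply, ann_apply, cre]
  | succ m =>
    simp only [LinearMap.sub_apply, Module.End.mul_apply, Pi.sub_apply, Module.End.one_apply,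
      ann_apply, cre_apply_succ, ← mul_assoc]
    rw [Complex.ofReal_sqrt_mul_self (by positivity), Complex.ofReal_sqrt_mul_self (by positivity)]
    push_cast
    ring

/-- The commutator of `p(a)` with the creation operator equals the formal
derivative of `p` evaluated at `a`: `p(a) ∘ a† − a† ∘ p(a) = p'(a)`. -/
theorem commutator_polynomial_cre (p : Polynomial ℂ) :
    Polynomial.aeval ann p * cre - cre * Polynomial.aeval ann p
      = Polynomial.aeval ann (Polynomial.derivative p) :=
  aeval_mul_sub_mul_aeval_of_mul_sub_mul_eq_one ann_mul_cre_sub_cre_mul_ann p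
end

section
/- Well-definedness of the complementary Kraus operator: let n be a finite type, let A be an n × n complex matrix that is Hermitian and positive semidefinite, and let t ≥ 0 be real. Then the matrix 1 − (exp(−t·A))ᴴ · exp(−t·A) is positive semidefinite, where exp denotes the matrix exponential and ᴴ the conjugate transpose. (Hence √(1 − K_a† K_a) with K_a = e^{−AΔt} defines a valid Kraus operator.) -/
open Matrix
open scoped ComplexOrder

/-- Well-definedness of the complementary Kraus operator: if `A` is Hermitian and
positive semidefinite and `t ≥ 0`, then `1 − (exp(−t·A))ᴴ · exp(−t·A)` is
positive semidefinite. -/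
theorem complementary_kraus_posSemidef {n : Type*} [Fintype n] [DecidableEq n]
    (A : Matrix n n ℂ) (hA : A.IsHermitian) (hA' : A.PosSemidef)
    (t : ℝ) (ht : 0 ≤ t) :
    ((1 : Matrix n n ℂ) -
      (NormedSpace.exp ((-(t : ℂ)) • A))ᴴ * NormedSpace.exp ((-(t : ℂ)) • A)).PosSemidef := by
  set U : Matrix n n ℂ := (hA.eigenvectorUnitary : Matrix n n ℂ) with hUdef
  have hU1 : U * Uᴴ = 1 := (Matrix.mem_unitaryGroup_iff).mp hA.eigenvectorUnitary.2
  have hU2 : Uᴴ * U = 1 := (Matrix.mem_unitaryGroup_iff').mp hA.eigenvectorUnitary.2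
  have hUinv : U⁻¹ = Uᴴ := Matrix.inv_eq_right_inv hU1
  have hUunit : IsUnit U := ⟨⟨U, Uᴴ, hU1, hU2⟩, rfl⟩
  set lam := hA.eigenvalues with hlam
  have hsmul : (-(t : ℂ)) • A = U * Matrix.diagonal (fun i => -(t : ℂ) * (lam i : ℂ)) * U⁻¹ := by
    rw [hUinv]
    conv_lhs => rw [hA.spectral_theorem]
    rw [Unitary.conjStarAlgAut_apply, Matrix.star_eq_conjTranspose, ← smul_mul_assoc, ← mul_smul_comm]
    congr 1
    congr 1
    ext i j
    by_cases h : i = j <;> simp [Matrix.diagonal, h, smul_eq_mul, hlam]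
  have hexp : NormedSpace.exp ((-(t : ℂ)) • A)
      = U * Matrix.diagonal (fun i => Complex.exp (-(t : ℂ) * (lam i : ℂ))) * Uᴴ := by
    rw [hsmul, Matrix.exp_conj U _ hUunit, Matrix.exp_diagonal, hUinv]
    congr 2
    funext i
    rw [Pi.exp_def, Complex.exp_eq_exp_ℂ]
  set D : Matrix n n ℂ := Matrix.diagonal (fun i => Complex.exp (-(t : ℂ) * (lam i : ℂ))) with hD
  have hstar : Dᴴ = D := by
    rw [hD, Matrix.diagonal_conjTranspose]
    have : (star fun i => Complex.exp (-(t : ℂ) * (lam i : ℂ)))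
        = fun i => Complex.exp (-(t : ℂ) * (lam i : ℂ)) := by
      funext i
      show (starRingEnd ℂ) (Complex.exp (-(t : ℂ) * (lam i : ℂ))) = _
      rw [← Complex.exp_conj, _root_.map_mul, _root_.map_neg, Complex.conj_ofReal,
        Complex.conj_ofReal]
    rw [this]
  have hDD : D * D = Matrix.diagonal (fun i => Complex.exp (-(2 * t : ℂ) * (lam i : ℂ))) := by
    rw [hD, Matrix.diagonal_mul_diagonal]
    have : (fun i => Complex.exp (-(t : ℂ) * (lam i : ℂ)) * Complex.exp (-(t : ℂ) * (lam i : ℂ)))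
        = fun i => Complex.exp (-(2 * t : ℂ) * (lam i : ℂ)) := by
      funext i
      rw [← Complex.exp_add]
      ring_nf
    rw [this]
  have hprod : ((1 : Matrix n n ℂ) -
      (NormedSpace.exp ((-(t : ℂ)) • A))ᴴ * NormedSpace.exp ((-(t : ℂ)) • A))
      = U * Matrix.diagonal (fun i => 1 - Complex.exp (-(2 * t : ℂ) * (lam i : ℂ))) * Uᴴ := by
    rw [hexp, Matrix.conjTranspose_mul, Matrix.conjTranspose_mul,
      Matrix.conjTranspose_conjTranspose, hstar]
    simp only [Matrix.mul_assoc]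
    rw [← Matrix.mul_assoc Uᴴ U, hU2, Matrix.one_mul, ← Matrix.mul_assoc D D, hDD]
    rw [show Matrix.diagonal (fun i => 1 - Complex.exp (-(2 * t : ℂ) * (lam i : ℂ)))
        = 1 - Matrix.diagonal (fun i => Complex.exp (-(2 * t : ℂ) * (lam i : ℂ))) from by
      rw [← Matrix.diagonal_one, ← Matrix.diagonal_sub]]
    rw [Matrix.sub_mul, Matrix.one_mul, Matrix.mul_sub, ← Matrix.mul_assoc, hU1]
  rw [hprod]
  apply Matrix.PosSemidef.mul_mul_conjTranspose_same
  rw [Matrix.posSemidef_diagonal_iff]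
  intro i
  have hli : 0 ≤ lam i := hA'.eigenvalues_nonneg i
  have hre : Complex.exp (-(2 * t : ℂ) * (lam i : ℂ)) = ((Real.exp (-(2 * t) * lam i) : ℝ) : ℂ) := by
    rw [Complex.ofReal_exp]
    congr 1
    push_cast
    ring
  rw [hre, ← Complex.ofReal_one, ← Complex.ofReal_sub]
  rw [Complex.zero_le_real]
  have : Real.exp (-(2 * t) * lam i) ≤ 1 := by
    rw [Real.exp_le_one_iff]
    nlinarith
  linarith
end

section
/- Step-size bound for the success probability: let n be a finite type, A an n × n complex Hermitian matrix, and ρ an n × n complex matrix that is positive semidefinite with trace(ρ) = 1. Then for every real t ≥ 0, Re trace((exp(−t·A))ᴴ · exp(−t·A) · ρ) ≥ 1 − 2t · Re trace(A·ρ). In particular, if 2t · Re trace(A·ρ) ≤ ε then the success probability is at least 1 − ε. -/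
open Matrix
open scoped ComplexOrder

lemma trace_re_nonneg' {n : Type*} [Fintype n] [DecidableEq n] {M : Matrix n n ℂ}
    (hM : M.PosSemidef) : 0 ≤ (Matrix.trace M).re := by
  rw [Matrix.trace, Complex.re_sum]
  refine Finset.sum_nonneg fun i _ => ?_
  have := hM.re_dotProduct_nonneg (Pi.single i 1)
  simpa [dotProduct, mulVec, Pi.single_apply, Matrix.diag] using this

open scoped MatrixOrder in
lemma trace_mul_psd_nonneg' {n : Type*} [Fintype n] [DecidableEq n]
    {B ρ : Matrix n n ℂ} (hB : B.PosSemidef) (hρ : ρ.PosSemidef) :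
    0 ≤ (Matrix.trace (B * ρ)).re := by
  have h : B * ρ = B * CFC.sqrt ρ * CFC.sqrt ρ := by rw [mul_assoc, CFC.sqrt_mul_sqrt_self ρ hρ.nonneg]
  rw [h, Matrix.trace_mul_cycle]
  have hherm : (CFC.sqrt ρ)ᴴ = CFC.sqrt ρ := (CFC.sqrt_nonneg ρ).posSemidef.isHermitian
  have := hB.conjTranspose_mul_mul_same (CFC.sqrt ρ)
  rw [hherm] at this
  exact trace_re_nonneg' this

lemma psd_key' {n : Type*} [Fintype n] [DecidableEq n] (A : Matrix n n ℂ) (hA : A.IsHermitian)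
    (s : ℝ) :
    (NormedSpace.exp ((-(s : ℂ)) • A) - 1 + (s : ℂ) • A).PosSemidef := by
  set U : Matrix n n ℂ := (hA.eigenvectorUnitary : Matrix n n ℂ) with hUdef
  have hU2 : U * star U = 1 := Matrix.mem_unitaryGroup_iff.mp hA.eigenvectorUnitary.2
  have hUinv : U⁻¹ = star U := inv_eq_right_inv hU2
  have hU1 : star U * U = 1 := Matrix.mem_unitaryGroup_iff'.mp hA.eigenvectorUnitary.2
  have hUunit : IsUnit U := ⟨⟨U, star U, hU2, hU1⟩, rfl⟩
  have hdiag : ∀ c : ℂ, c • A = U * diagonal (fun i => c * (hA.eigenvalues i : ℂ)) * star U := by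
    intro c
    conv_lhs => rw [hA.spectral_theorem, Unitary.conjStarAlgAut_apply, ← hUdef]
    rw [← Matrix.smul_mul, ← Matrix.mul_smul]
    congr 2
    ext i j
    by_cases h : i = j <;> simp [Matrix.diagonal_apply, h]
  have hexp : NormedSpace.exp ((-(s : ℂ)) • A)
      = U * diagonal (fun i => Complex.exp (-(s : ℂ) * (hA.eigenvalues i : ℂ))) * star U := by
    rw [hdiag (-(s : ℂ)), ← hUinv, Matrix.exp_conj _ _ hUunit, Matrix.exp_diagonal]
    rw [Pi.exp_def]
    congr 2
    ext i
    simp [Complex.exp_eq_exp_ℂ]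
  have hone : (1 : Matrix n n ℂ) = U * diagonal (fun _ => (1 : ℂ)) * star U := by
    rw [diagonal_one, mul_one, hU2]
  rw [hexp, hdiag (s : ℂ), hone, ← Matrix.sub_mul, ← Matrix.add_mul, ← Matrix.mul_sub,
    ← Matrix.mul_add, diagonal_sub, diagonal_add]
  have : (diagonal (fun i => Complex.exp (-(s : ℂ) * (hA.eigenvalues i : ℂ)) - 1
      + (s : ℂ) * (hA.eigenvalues i : ℂ))).PosSemidef := by
    refine PosSemidef.diagonal fun i => ?_
    have hre : Complex.exp (-(s : ℂ) * (hA.eigenvalues i : ℂ)) - 1 + (s : ℂ) * (hA.eigenvalues i : ℂ)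
        = ((Real.exp (-(s * hA.eigenvalues i)) - 1 + s * hA.eigenvalues i : ℝ) : ℂ) := by
      push_cast [Complex.ofReal_exp]
      ring_nf
    rw [Pi.zero_apply, hre, Complex.zero_le_real]
    have := Real.add_one_le_exp (-(s * hA.eigenvalues i))
    linarith
  simpa [Matrix.star_eq_conjTranspose] using this.mul_mul_conjTranspose_same U

/-- Step-size bound for the success probability: for `A` Hermitian and `ρ` a
density matrix, `Re trace((exp(−t·A))ᴴ·exp(−t·A)·ρ) ≥ 1 − 2t·Re trace(A·ρ)` for
all `t ≥ 0`; in particular if `2t·Re trace(A·ρ) ≤ ε` the success probability is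
at least `1 − ε`. -/
theorem success_probability_lower_bound {n : Type*} [Fintype n] [DecidableEq n]
    (A : Matrix n n ℂ) (hA : A.IsHermitian)
    (ρ : Matrix n n ℂ) (hρ : ρ.PosSemidef) (hρtr : Matrix.trace ρ = 1)
    (t : ℝ) (ht : 0 ≤ t) :
    1 - 2 * t * (Matrix.trace (A * ρ)).re ≤
      (Matrix.trace ((NormedSpace.exp ((-(t : ℂ)) • A))ᴴ *
        NormedSpace.exp ((-(t : ℂ)) • A) * ρ)).re ∧
    ∀ ε : ℝ, 2 * t * (Matrix.trace (A * ρ)).re ≤ ε →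
      1 - ε ≤ (Matrix.trace ((NormedSpace.exp ((-(t : ℂ)) • A))ᴴ *
        NormedSpace.exp ((-(t : ℂ)) • A) * ρ)).re := by
  have hherm : ((-(t : ℂ)) • A).IsHermitian := by
    rw [Matrix.IsHermitian, conjTranspose_smul, hA.eq]
    congr 1
    simp [Complex.star_def]
  have hexpH : (NormedSpace.exp ((-(t : ℂ)) • A))ᴴ = NormedSpace.exp ((-(t : ℂ)) • A) := by
    rw [← Matrix.exp_conjTranspose, hherm.eq]
  have hmul : NormedSpace.exp ((-(t : ℂ)) • A) * NormedSpace.exp ((-(t : ℂ)) • A)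
      = NormedSpace.exp ((-((2 * t : ℝ) : ℂ)) • A) := by
    rw [← Matrix.exp_add_of_commute _ _ (Commute.refl _)]
    congr 1
    rw [← add_smul]
    congr 1
    push_cast
    ring
  have key := trace_mul_psd_nonneg' (psd_key' A hA (2 * t)) hρ
  have hexpand : (Matrix.trace ((NormedSpace.exp ((-((2 * t : ℝ) : ℂ)) • A) - 1
        + ((2 * t : ℝ) : ℂ) • A) * ρ)).re
      = (Matrix.trace (NormedSpace.exp ((-((2 * t : ℝ) : ℂ)) • A) * ρ)).re - 1
        + 2 * t * (Matrix.trace (A * ρ)).re := by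
    rw [Matrix.add_mul, Matrix.sub_mul, Matrix.one_mul, Matrix.smul_mul, trace_add, trace_sub,
      trace_smul, hρtr]
    simp [Complex.sub_re, Complex.add_re, Complex.one_re, smul_eq_mul, Complex.re_ofReal_mul]
  rw [hexpand] at key
  have h1 : 1 - 2 * t * (Matrix.trace (A * ρ)).re ≤
      (Matrix.trace ((NormedSpace.exp ((-(t : ℂ)) • A))ᴴ *
        NormedSpace.exp ((-(t : ℂ)) • A) * ρ)).re := by
    rw [hexpH, hmul]
    linarith
  exact ⟨h1, fun ε hε => le_trans (by linarith) h1⟩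
end
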